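/- arXiv:2206.08606 — 5 statements merged into one kernel-verified Lean document; each statement's English description precedes it below -/
import Mathlib

section
/- Let T = (t_{i₁⋯i_k}) ∈ ℂ^{n₁}⊗⋯⊗ℂ^{n_k} and let (x₁,…,x_k) be a singular k-tuple of T with singular values λ_i, i.e., for each ℓ ∈ [k] the contraction T(x₁⊗⋯⊗x_{ℓ-1}⊗x_{ℓ+1}⊗⋯⊗x_k) ∈ ℂ^{n_ℓ} equals λ_ℓ x_ℓ. Then the rank-one tensor z with coordinates z_{i₁⋯i_k} = x_{1,i₁}⋯x_{k,i_k} belongs to the critical space H_T, i.e., for every ℓ ∈ [k] and 1 ≤ p < q ≤ n_ℓ: ∑_{i_j∈[n_j], j≠ℓ} ( t_{i₁⋯p⋯i_k} z_{i₁⋯q⋯i_k} − t_{i₁⋯q⋯i_k} z_{i₁⋯p⋯i_k} ) = 0. -/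
/-- The rank-one tensor coming from a singular `k`-tuple of `T` belongs to the
critical space `H_T`. -/
theorem singular_tuple_mem_critical_space
    {k : ℕ} {n : Fin k → ℕ}
    (T : (∀ j : Fin k, Fin (n j)) → ℂ)
    (x : ∀ j : Fin k, Fin (n j) → ℂ) (lam : Fin k → ℂ)
    (hsing : ∀ ℓ : Fin k, ∀ s : Fin (n ℓ),
      ∑ i ∈ Finset.univ.filter (fun i : ∀ j : Fin k, Fin (n j) => i ℓ = s),
        T i * ∏ j ∈ Finset.univ.erase ℓ, x j (i j) = lam ℓ * x ℓ s)
    (z : (∀ j : Fin k, Fin (n j)) → ℂ)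
    (hz : ∀ i : ∀ j : Fin k, Fin (n j), z i = ∏ j, x j (i j))
    (ℓ : Fin k) (p q : Fin (n ℓ)) (hpq : p < q) :
    ∑ i ∈ Finset.univ.filter (fun i : ∀ j : Fin k, Fin (n j) => i ℓ = p),
      (T i * z (Function.update i ℓ q) - T (Function.update i ℓ q) * z i) = 0 := by
  have key : ∀ (s : Fin (n ℓ)) (i : ∀ j : Fin k, Fin (n j)), i ℓ = s →
      z i = x ℓ s * ∏ j ∈ Finset.univ.erase ℓ, x j (i j) := by
    intro s i his
    rw [hz, ← Finset.mul_prod_erase Finset.univ _ (Finset.mem_univ ℓ), his]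
  have hprod : ∀ (i : ∀ j : Fin k, Fin (n j)) (s : Fin (n ℓ)),
      ∏ j ∈ Finset.univ.erase ℓ, x j (Function.update i ℓ s j)
        = ∏ j ∈ Finset.univ.erase ℓ, x j (i j) := by
    intro i s
    apply Finset.prod_congr rfl
    intro j hj
    rw [Function.update_of_ne (Finset.ne_of_mem_erase hj)]
  rw [Finset.sum_sub_distrib]
  have h1 : ∑ i ∈ Finset.univ.filter (fun i : ∀ j : Fin k, Fin (n j) => i ℓ = p),
      T i * z (Function.update i ℓ q) = x ℓ q * (lam ℓ * x ℓ p) := by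
    rw [← hsing ℓ p, Finset.mul_sum]
    apply Finset.sum_congr rfl
    intro i hi
    have hzz : z (Function.update i ℓ q)
        = x ℓ q * ∏ j ∈ Finset.univ.erase ℓ, x j (i j) := by
      rw [key q _ (Function.update_self ℓ q i), hprod]
    rw [hzz]; ring
  have h2 : ∑ i ∈ Finset.univ.filter (fun i : ∀ j : Fin k, Fin (n j) => i ℓ = p),
      T (Function.update i ℓ q) * z i = x ℓ p * (lam ℓ * x ℓ q) := by
    rw [← hsing ℓ q, Finset.mul_sum]
    apply Finset.sum_bij' (fun i _ => Function.update i ℓ q)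
      (fun i _ => Function.update i ℓ p)
    · intro i hi
      simp only [Finset.mem_filter, Finset.mem_univ, true_and] at hi
      rw [Function.update_idem, ← hi, Function.update_eq_self]
    · intro i hi
      simp only [Finset.mem_filter, Finset.mem_univ, true_and] at hi
      rw [Function.update_idem, ← hi, Function.update_eq_self]
    · intro i hi
      simp only [Finset.mem_filter, Finset.mem_univ, true_and] at hi
      rw [hprod, key p i hi]
      ring
    · intro i hi
      simp only [Finset.mem_filter, Finset.mem_univ, true_and] at hi ⊢
      exact Function.update_self ℓ q i
    · intro i hi
      simp only [Finset.mem_filter, Finset.mem_univ, true_and] at hi ⊢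
      exact Function.update_self ℓ p i
  rw [h1, h2]; ring
end

section
/- For every integer n ≥ 3, the coefficient of h₁ h₂ h₃^{n-1} in the polynomial (h₁+h₂+h₃)² · ∑_{j=0}^{n-1} (h₁+h₂)^{n-1-j} h₃^{j} ∈ ℤ[h₁,h₂,h₃] equals 8. Moreover, for n = 2 the corresponding coefficient of h₁ h₂ h₃ equals 6. -/
open MvPolynomial

private lemma coeffP (a c : ℕ) :
    MvPolynomial.coeff
      (Finsupp.single 0 1 + Finsupp.single 1 1 + Finsupp.single 2 c)
      ((X 0 + X 1 : MvPolynomial (Fin 3) ℤ) ^ a)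
      = if a = 2 ∧ c = 0 then 2 else 0 := by
  have hfin : ∀ k m : ℕ,
      (Finsupp.single (0 : Fin 3) k + Finsupp.single 1 m =
        Finsupp.single 0 1 + Finsupp.single 1 1 + Finsupp.single 2 c) ↔
      (k = 1 ∧ m = 1 ∧ c = 0) := by
    intro k m
    constructor
    · intro h
      have h0 := DFunLike.congr_fun h 0
      have h1 := DFunLike.congr_fun h 1
      have h2 := DFunLike.congr_fun h 2
      simp [Finsupp.single_apply] at h0 h1 h2
      exact ⟨h0, h1, h2.symm⟩
    · rintro ⟨rfl, rfl, rfl⟩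
      simp
  rw [add_pow, coeff_sum]
  have hterm : ∀ k : ℕ,
      MvPolynomial.coeff
        (Finsupp.single 0 1 + Finsupp.single 1 1 + Finsupp.single 2 c)
        ((X 0 : MvPolynomial (Fin 3) ℤ) ^ k * X 1 ^ (a - k) * (a.choose k : MvPolynomial (Fin 3) ℤ))
      = if k = 1 ∧ a - k = 1 ∧ c = 0 then (a.choose k : ℤ) else 0 := by
    intro k
    rw [X_pow_eq_monomial, X_pow_eq_monomial, monomial_mul, mul_one,
      show ((a.choose k : ℕ) : MvPolynomial (Fin 3) ℤ) = C (a.choose k : ℤ) from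
        (map_natCast C _).symm,
      mul_comm, coeff_C_mul, coeff_monomial]
    simp only [hfin k (a - k)]
    split_ifs <;> ring
  simp only [hterm]
  by_cases h : a = 2 ∧ c = 0
  · obtain ⟨rfl, rfl⟩ := h
    norm_num [Finset.sum_range_succ]
  · rw [if_neg h]
    apply Finset.sum_eq_zero
    intro k _
    rw [if_neg]
    rintro ⟨rfl, h2, h3⟩
    exact h ⟨by omega, h3⟩

private lemma coeffPX (a b c : ℕ) :
    MvPolynomial.coeff
      (Finsupp.single 0 1 + Finsupp.single 1 1 + Finsupp.single 2 c)
      ((X 0 + X 1 : MvPolynomial (Fin 3) ℤ) ^ a * X 2 ^ b)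
      = if a = 2 ∧ b = c then 2 else 0 := by
  rw [X_pow_eq_monomial, coeff_mul_monomial']
  by_cases hbc : b ≤ c
  · rw [if_pos]
    · have hsub : (Finsupp.single (0 : Fin 3) 1 + Finsupp.single 1 1 + Finsupp.single 2 c)
          - Finsupp.single 2 b
          = Finsupp.single 0 1 + Finsupp.single 1 1 + Finsupp.single 2 (c - b) := by
        ext i
        simp [Finsupp.tsub_apply, Finsupp.single_apply]
        split_ifs <;> omega
      rw [hsub, coeffP, mul_one]
      split_ifs with h1 h2 h2 <;> first | rfl | (exfalso; omega)
    · rw [Finsupp.le_def]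
      intro i
      simp [Finsupp.single_apply]
      split_ifs <;> omega
  · rw [if_neg, if_neg]
    · rintro ⟨-, rfl⟩; exact hbc le_rfl
    · rw [Finsupp.le_def]
      push_neg
      refine ⟨2, ?_⟩
      simp [Finsupp.single_apply]
      omega

private lemma expand22 (a j : ℕ) :
    (X 0 + X 1 + X 2 : MvPolynomial (Fin 3) ℤ) ^ 2 * ((X 0 + X 1) ^ a * X 2 ^ j)
    = (X 0 + X 1) ^ (a + 2) * X 2 ^ j
      + ((X 0 + X 1) ^ (a + 1) * X 2 ^ (j + 1) + (X 0 + X 1) ^ (a + 1) * X 2 ^ (j + 1))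
      + (X 0 + X 1) ^ a * X 2 ^ (j + 2) := by
  ring

/-- `ed(2,2,n) = 8` for all `n ≥ 3`, while `ed(2,2,2) = 6`. -/
theorem ed_degree_22n :
    (∀ n : ℕ, 3 ≤ n →
      MvPolynomial.coeff
        (Finsupp.single 0 1 + Finsupp.single 1 1 + Finsupp.single 2 (n - 1))
        (((X 0 + X 1 + X 2 : MvPolynomial (Fin 3) ℤ)) ^ 2 *
          ∑ j ∈ Finset.range n, (X 0 + X 1 : MvPolynomial (Fin 3) ℤ) ^ (n - 1 - j) * X 2 ^ j)
        = 8) ∧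
    MvPolynomial.coeff
        (Finsupp.single 0 1 + Finsupp.single 1 1 + Finsupp.single 2 1)
        (((X 0 + X 1 + X 2 : MvPolynomial (Fin 3) ℤ)) ^ 2 *
          ∑ j ∈ Finset.range 2, (X 0 + X 1 : MvPolynomial (Fin 3) ℤ) ^ (2 - 1 - j) * X 2 ^ j)
        = 6 := by
  constructor
  · intro n hn
    rw [Finset.mul_sum, coeff_sum]
    have hterm : ∀ j ∈ Finset.range n,
        MvPolynomial.coeff
          (Finsupp.single 0 1 + Finsupp.single 1 1 + Finsupp.single 2 (n - 1))
          ((X 0 + X 1 + X 2 : MvPolynomial (Fin 3) ℤ) ^ 2 *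
            ((X 0 + X 1) ^ (n - 1 - j) * X 2 ^ j))
        = (if j = n - 1 then 2 else 0) + ((if j = n - 2 then 2 else 0)
            + (if j = n - 2 then 2 else 0)) + (if j = n - 3 then 2 else 0) := by
      intro j hj
      rw [Finset.mem_range] at hj
      rw [expand22, coeff_add, coeff_add, coeff_add, coeffPX, coeffPX, coeffPX]
      simp only [show (n - 1 - j + 2 = 2 ∧ j = n - 1) ↔ j = n - 1 from by omega,
        show (n - 1 - j + 1 = 2 ∧ j + 1 = n - 1) ↔ j = n - 2 from by omega,
        show (n - 1 - j = 2 ∧ j + 2 = n - 1) ↔ j = n - 3 from by omega]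
    rw [Finset.sum_congr rfl hterm]
    simp only [Finset.sum_add_distrib, Finset.sum_ite_eq']
    have h1 : n - 1 ∈ Finset.range n := by simp only [Finset.mem_range]; omega
    have h2 : n - 2 ∈ Finset.range n := by simp only [Finset.mem_range]; omega
    have h3 : n - 3 ∈ Finset.range n := by simp only [Finset.mem_range]; omega
    rw [if_pos h1, if_pos h2, if_pos h3]
    norm_num
  · rw [Finset.mul_sum, coeff_sum]
    have hterm : ∀ j ∈ Finset.range 2,
        MvPolynomial.coeff
          (Finsupp.single 0 1 + Finsupp.single 1 1 + Finsupp.single 2 1)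
          ((X 0 + X 1 + X 2 : MvPolynomial (Fin 3) ℤ) ^ 2 *
            ((X 0 + X 1) ^ (2 - 1 - j) * X 2 ^ j))
        = (if j = 1 then 2 else 0) + ((if j = 0 then 2 else 0)
            + (if j = 0 then 2 else 0)) + 0 := by
      intro j hj
      rw [Finset.mem_range] at hj
      rw [expand22, coeff_add, coeff_add, coeff_add, coeffPX, coeffPX, coeffPX]
      simp only [show (2 - 1 - j + 2 = 2 ∧ j = 1) ↔ j = 1 from by omega,
        show (2 - 1 - j + 1 = 2 ∧ j + 1 = 1) ↔ j = 0 from by omega,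
        if_neg (show ¬(2 - 1 - j = 2 ∧ j + 2 = 1) from by omega)]
    rw [Finset.sum_congr rfl hterm]
    norm_num [Finset.sum_range_succ]
end

section
/- For every integer n ≥ 4, the coefficient of h₁ h₂² h₃^{n-1} in the polynomial (h₂+h₃+h₁) · ( ∑_{j=0}^{2} (h₁+h₃)^{2-j} h₂^{j} ) · ( ∑_{j=0}^{n-1} (h₁+h₂)^{n-1-j} h₃^{j} ) ∈ ℤ[h₁,h₂,h₃] equals 18. -/
open MvPolynomial

private noncomputable def edF : MvPolynomial (Fin 3) ℤ :=
  (X 1 + X 2 + X 0) * (∑ j ∈ Finset.range 3, (X 0 + X 2) ^ (2 - j) * X 1 ^ j)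

private noncomputable def edB (n : ℕ) : MvPolynomial (Fin 3) ℤ :=
  ∑ j ∈ Finset.range n, (X 0 + X 1) ^ (n - 1 - j) * X 2 ^ j

private noncomputable def edm (n : ℕ) : Fin 3 →₀ ℕ :=
  Finsupp.single 0 1 + Finsupp.single 1 2 + Finsupp.single 2 (n - 1)

private lemma single_sum_eq_iff (a b c a' b' c' : ℕ) :
    (Finsupp.single 0 a + Finsupp.single 1 b + Finsupp.single 2 c : Fin 3 →₀ ℕ) =
      Finsupp.single 0 a' + Finsupp.single 1 b' + Finsupp.single 2 c' ↔
    a = a' ∧ b = b' ∧ c = c' := by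
  constructor
  · intro h
    refine ⟨?_, ?_, ?_⟩
    · have := congrFun (congrArg (fun f : Fin 3 →₀ ℕ => (f : Fin 3 → ℕ)) h) 0
      simpa [Finsupp.single_apply] using this
    · have := congrFun (congrArg (fun f : Fin 3 →₀ ℕ => (f : Fin 3 → ℕ)) h) 1
      simpa [Finsupp.single_apply] using this
    · have := congrFun (congrArg (fun f : Fin 3 →₀ ℕ => (f : Fin 3 → ℕ)) h) 2
      simpa [Finsupp.single_apply] using this
  · rintro ⟨rfl, rfl, rfl⟩; rfl

private lemma coeff_aux (m : Fin 3 →₀ ℕ) (a b c : ℕ) (r : ℤ) :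
    MvPolynomial.coeff m (C r * X 0 ^ a * X 1 ^ b * X 2 ^ c : MvPolynomial (Fin 3) ℤ) =
      if m = Finsupp.single 0 a + Finsupp.single 1 b + Finsupp.single 2 c then r else 0 := by
  rw [C_apply, X_pow_eq_monomial, X_pow_eq_monomial, X_pow_eq_monomial,
    monomial_mul, monomial_mul, monomial_mul, coeff_monomial]
  simp [add_assoc, eq_comm]

set_option maxHeartbeats 2000000 in
private lemma ed_base : MvPolynomial.coeff (edm 4) (edF * edB 4) = 18 := by
  have hP : edF * edB 4 =
      C (1:ℤ) * X 0 ^ 0 * X 1 ^ 0 * X 2 ^ 6 +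
      C (3:ℤ) * X 0 ^ 0 * X 1 ^ 1 * X 2 ^ 5 +
      C (5:ℤ) * X 0 ^ 0 * X 1 ^ 2 * X 2 ^ 4 +
      C (6:ℤ) * X 0 ^ 0 * X 1 ^ 3 * X 2 ^ 3 +
      C (5:ℤ) * X 0 ^ 0 * X 1 ^ 4 * X 2 ^ 2 +
      C (3:ℤ) * X 0 ^ 0 * X 1 ^ 5 * X 2 ^ 1 +
      C (1:ℤ) * X 0 ^ 0 * X 1 ^ 6 * X 2 ^ 0 +
      C (4:ℤ) * X 0 ^ 1 * X 1 ^ 0 * X 2 ^ 5 +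
      C (11:ℤ) * X 0 ^ 1 * X 1 ^ 1 * X 2 ^ 4 +
      C (18:ℤ) * X 0 ^ 1 * X 1 ^ 2 * X 2 ^ 3 +
      C (20:ℤ) * X 0 ^ 1 * X 1 ^ 3 * X 2 ^ 2 +
      C (14:ℤ) * X 0 ^ 1 * X 1 ^ 4 * X 2 ^ 1 +
      C (5:ℤ) * X 0 ^ 1 * X 1 ^ 5 * X 2 ^ 0 +
      C (7:ℤ) * X 0 ^ 2 * X 1 ^ 0 * X 2 ^ 4 +
      C (20:ℤ) * X 0 ^ 2 * X 1 ^ 1 * X 2 ^ 3 +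
      C (32:ℤ) * X 0 ^ 2 * X 1 ^ 2 * X 2 ^ 2 +
      C (28:ℤ) * X 0 ^ 2 * X 1 ^ 3 * X 2 ^ 1 +
      C (11:ℤ) * X 0 ^ 2 * X 1 ^ 4 * X 2 ^ 0 +
      C (8:ℤ) * X 0 ^ 3 * X 1 ^ 0 * X 2 ^ 3 +
      C (24:ℤ) * X 0 ^ 3 * X 1 ^ 1 * X 2 ^ 2 +
      C (30:ℤ) * X 0 ^ 3 * X 1 ^ 2 * X 2 ^ 1 +
      C (14:ℤ) * X 0 ^ 3 * X 1 ^ 3 * X 2 ^ 0 +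
      C (7:ℤ) * X 0 ^ 4 * X 1 ^ 0 * X 2 ^ 2 +
      C (17:ℤ) * X 0 ^ 4 * X 1 ^ 1 * X 2 ^ 1 +
      C (11:ℤ) * X 0 ^ 4 * X 1 ^ 2 * X 2 ^ 0 +
      C (4:ℤ) * X 0 ^ 5 * X 1 ^ 0 * X 2 ^ 1 +
      C (5:ℤ) * X 0 ^ 5 * X 1 ^ 1 * X 2 ^ 0 +
      C (1:ℤ) * X 0 ^ 6 * X 1 ^ 0 * X 2 ^ 0 := by
    have h1 : (C (1:ℤ) : MvPolynomial (Fin 3) ℤ) = 1 := map_one _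
    simp only [edF, edB, Finset.sum_range_succ, Finset.sum_range_zero, map_ofNat, h1]
    ring
  rw [hP]
  simp only [coeff_add, coeff_aux, edm, Nat.reduceSub, single_sum_eq_iff]
  norm_num

private lemma edB_succ (n : ℕ) :
    edB (n + 1) = (X 0 + X 1) ^ n + X 2 * edB n := by
  unfold edB
  rw [Finset.sum_range_succ']
  simp only [Nat.add_sub_cancel, Nat.sub_zero, pow_zero, mul_one]
  rw [add_comm, Finset.mul_sum]
  congr 1
  refine Finset.sum_congr rfl fun j hj => ?_
  have : n - (j + 1) = n - 1 - j := by omega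
  rw [this, pow_succ]
  ring

private lemma edF_coeff_zero (n : ℕ) (hn : 4 ≤ n) :
    MvPolynomial.coeff (edm (n + 1)) (edF * (X 0 + X 1 : MvPolynomial (Fin 3) ℤ) ^ n) = 0 := by
  by_contra h
  have hmem : edm (n + 1) ∈ (edF * (X 0 + X 1 : MvPolynomial (Fin 3) ℤ) ^ n).support :=
    mem_support_iff.2 h
  have hle := monomial_le_degreeOf 2 hmem
  have hval : edm (n + 1) 2 = n := by
    simp [edm, Finsupp.single_apply]
  have hdF : degreeOf 2 edF ≤ 3 := by
    unfold edF
    refine le_trans (degreeOf_mul_le _ _ _) ?_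
    have h1 : degreeOf 2 (X 1 + X 2 + X 0 : MvPolynomial (Fin 3) ℤ) ≤ 1 := by
      refine le_trans (degreeOf_add_le _ _ _) ?_
      refine max_le (le_trans (degreeOf_add_le _ _ _) ?_) ?_
      · refine max_le ?_ ?_ <;> simp [degreeOf_X]
      · simp [degreeOf_X]
    have h2 : degreeOf 2 (∑ j ∈ Finset.range 3,
        ((X 0 + X 2 : MvPolynomial (Fin 3) ℤ)) ^ (2 - j) * X 1 ^ j) ≤ 2 := by
      refine le_trans (degreeOf_sum_le _ _ _) ?_
      refine Finset.sup_le fun j hj => ?_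
      refine le_trans (degreeOf_mul_le _ _ _) ?_
      have ha : degreeOf 2 ((X 0 + X 2 : MvPolynomial (Fin 3) ℤ)) ≤ 1 := by
        refine le_trans (degreeOf_add_le _ _ _) ?_
        refine max_le ?_ ?_ <;> simp [degreeOf_X]
      have hb : degreeOf 2 ((X 1 : MvPolynomial (Fin 3) ℤ)) = 0 := by
        simp [degreeOf_X]
      calc degreeOf 2 ((X 0 + X 2 : MvPolynomial (Fin 3) ℤ) ^ (2 - j))
            + degreeOf 2 ((X 1 : MvPolynomial (Fin 3) ℤ) ^ j)
          ≤ (2 - j) * 1 + j * 0 := by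
            refine add_le_add (le_trans (degreeOf_pow_le _ _ _) ?_)
              (le_trans (degreeOf_pow_le _ _ _) ?_)
            · exact Nat.mul_le_mul_left _ ha
            · simp [hb]
        _ ≤ 2 := by omega
    omega
  have hdP : degreeOf 2 ((X 0 + X 1 : MvPolynomial (Fin 3) ℤ) ^ n) = 0 := by
    have ha : degreeOf 2 ((X 0 + X 1 : MvPolynomial (Fin 3) ℤ)) = 0 := by
      refine le_antisymm ?_ (Nat.zero_le _)
      refine le_trans (degreeOf_add_le _ _ _) ?_
      refine max_le ?_ ?_ <;> simp [degreeOf_X]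
    have h := degreeOf_pow_le 2 ((X 0 + X 1 : MvPolynomial (Fin 3) ℤ)) n
    rw [ha, Nat.mul_zero] at h
    omega
  have hfinal : n ≤ 3 + 0 := by
    calc n = edm (n + 1) 2 := hval.symm
      _ ≤ degreeOf 2 (edF * (X 0 + X 1 : MvPolynomial (Fin 3) ℤ) ^ n) := hle
      _ ≤ degreeOf 2 edF + degreeOf 2 ((X 0 + X 1 : MvPolynomial (Fin 3) ℤ) ^ n) :=
          degreeOf_mul_le _ _ _
      _ ≤ 3 + 0 := add_le_add hdF hdP.le
  omega

private lemma edm_succ (n : ℕ) (hn : 1 ≤ n) :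
    edm (n + 1) = Finsupp.single 2 1 + edm n := by
  unfold edm
  have h : n + 1 - 1 = 1 + (n - 1) := by omega
  rw [h, Finsupp.single_add]
  abel

private lemma ed_step (n : ℕ) (hn : 4 ≤ n) :
    MvPolynomial.coeff (edm (n + 1)) (edF * edB (n + 1)) =
      MvPolynomial.coeff (edm n) (edF * edB n) := by
  rw [edB_succ, mul_add, coeff_add, edF_coeff_zero n hn, zero_add,
    mul_left_comm, edm_succ n (by omega), coeff_X_mul]

private lemma ed_key (n : ℕ) (hn : 4 ≤ n) :
    MvPolynomial.coeff (edm n) (edF * edB n) = 18 := by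
  induction n, hn using Nat.le_induction with
  | base => exact ed_base
  | succ n hn ih => rw [ed_step n hn, ih]

/-- `ed(2,3,n) = 18` for all `n ≥ 4`. -/
theorem ed_degree_23n (n : ℕ) (hn : 4 ≤ n) :
    MvPolynomial.coeff
      (Finsupp.single 0 1 + Finsupp.single 1 2 + Finsupp.single 2 (n - 1))
      ((X 1 + X 2 + X 0 : MvPolynomial (Fin 3) ℤ) *
        (∑ j ∈ Finset.range 3, (X 0 + X 2 : MvPolynomial (Fin 3) ℤ) ^ (2 - j) * X 1 ^ j) *
        (∑ j ∈ Finset.range n, (X 0 + X 1 : MvPolynomial (Fin 3) ℤ) ^ (n - 1 - j) * X 2 ^ j))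
      = 18 := by
  have := ed_key n hn
  simpa [edm, edF, edB, mul_assoc] using this
end

section
/- Fix positive integers a, b and k = 3. For all integers m ≥ a + b + 1, the coefficient of h₁^{a} h₂^{b} h₃^{m-1} in ( ∑_{i=0}^{a} (h₂+h₃)^{a-i} h₁^{i} ) · ( ∑_{i=0}^{b} (h₁+h₃)^{b-i} h₂^{i} ) · ( ∑_{i=0}^{m-1} (h₁+h₂)^{m-1-i} h₃^{i} ) is independent of m, i.e., it equals its value at m = a + b + 1. -/
set_option maxHeartbeats 1000000

open MvPolynomial Finset

namespace EDstab

noncomputable def P (a : ℕ) : MvPolynomial (Fin 3) ℤ :=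
  ∑ i ∈ Finset.range (a + 1), (X 1 + X 2) ^ (a - i) * X 0 ^ i

noncomputable def Q (b : ℕ) : MvPolynomial (Fin 3) ℤ :=
  ∑ i ∈ Finset.range (b + 1), (X 0 + X 2) ^ (b - i) * X 1 ^ i

noncomputable def g (a b j : ℕ) : ℤ :=
  coeff (Finsupp.single 0 a + Finsupp.single 1 b + Finsupp.single 2 j)
    (P a * Q b * (X 0 + X 1) ^ j)

lemma totalDegree_P_le (a : ℕ) : (P a).totalDegree ≤ a := by
  refine (totalDegree_finset_sum _ _).trans (Finset.sup_le fun i hi => ?_)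
  refine (totalDegree_mul _ _).trans ?_
  have hx : ((X 1 + X 2 : MvPolynomial (Fin 3) ℤ)).totalDegree ≤ 1 :=
    (totalDegree_add _ _).trans (max_le (totalDegree_X _).le (totalDegree_X _).le)
  have h1 : ((X 1 + X 2 : MvPolynomial (Fin 3) ℤ) ^ (a - i)).totalDegree ≤ a - i := by
    refine (totalDegree_pow _ _).trans ?_
    have := Nat.mul_le_mul (le_refl (a - i)) hx
    simpa using this
  have h2 : ((X 0 : MvPolynomial (Fin 3) ℤ) ^ i).totalDegree ≤ i := by
    refine (totalDegree_pow _ _).trans ?_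
    rw [totalDegree_X]; omega
  have hia : i ≤ a := by
    have := Finset.mem_range.mp hi; omega
  calc _ ≤ (a - i) + i := Nat.add_le_add h1 h2
    _ = a := by omega

lemma totalDegree_Q_le (b : ℕ) : (Q b).totalDegree ≤ b := by
  refine (totalDegree_finset_sum _ _).trans (Finset.sup_le fun i hi => ?_)
  refine (totalDegree_mul _ _).trans ?_
  have hx : ((X 0 + X 2 : MvPolynomial (Fin 3) ℤ)).totalDegree ≤ 1 :=
    (totalDegree_add _ _).trans (max_le (totalDegree_X _).le (totalDegree_X _).le)
  have h1 : ((X 0 + X 2 : MvPolynomial (Fin 3) ℤ) ^ (b - i)).totalDegree ≤ b - i := by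
    refine (totalDegree_pow _ _).trans ?_
    have := Nat.mul_le_mul (le_refl (b - i)) hx
    simpa using this
  have h2 : ((X 1 : MvPolynomial (Fin 3) ℤ) ^ i).totalDegree ≤ i := by
    refine (totalDegree_pow _ _).trans ?_
    rw [totalDegree_X]; omega
  have hib : i ≤ b := by
    have := Finset.mem_range.mp hi; omega
  calc _ ≤ (b - i) + i := Nat.add_le_add h1 h2
    _ = b := by omega

lemma degreeOf_two_pow_le (j : ℕ) :
    degreeOf 2 ((X 0 + X 1 : MvPolynomial (Fin 3) ℤ) ^ j) = 0 := by
  induction j with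
  | zero => simpa using MvPolynomial.degreeOf_C (1:ℤ) (2 : Fin 3)
  | succ n ih =>
    have h1 : degreeOf 2 ((X 0 + X 1 : MvPolynomial (Fin 3) ℤ)) = 0 := by
      refine Nat.le_zero.mp ?_
      refine (degreeOf_add_le _ _ _).trans ?_
      simp [degreeOf_X]
    have := degreeOf_mul_le 2 ((X 0 + X 1 : MvPolynomial (Fin 3) ℤ) ^ n) (X 0 + X 1)
    rw [pow_succ]
    omega

lemma g_eq_zero (a b j : ℕ) (hj : a + b < j) : g a b j = 0 := by
  by_contra h
  have hmem : (Finsupp.single 0 a + Finsupp.single 1 b + Finsupp.single 2 j : Fin 3 →₀ ℕ)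
      ∈ (P a * Q b * (X 0 + X 1) ^ j).support := mem_support_iff.mpr h
  have hdeg : degreeOf 2 (P a * Q b * (X 0 + X 1) ^ j) < j := by
    have h1 : degreeOf 2 (P a) ≤ a := (degreeOf_le_totalDegree _ _).trans (totalDegree_P_le a)
    have h2 : degreeOf 2 (Q b) ≤ b := (degreeOf_le_totalDegree _ _).trans (totalDegree_Q_le b)
    have h3 := degreeOf_mul_le 2 (P a * Q b) ((X 0 + X 1 : MvPolynomial (Fin 3) ℤ) ^ j)
    have h4 := degreeOf_mul_le 2 (P a) (Q b)
    have h5 := degreeOf_two_pow_le j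
    omega
  have := (degreeOf_lt_iff (by omega)).mp hdeg _ hmem
  simp [Finsupp.single_apply] at this

lemma key (a b m : ℕ) (hm : a + b + 1 ≤ m) :
    coeff (Finsupp.single 0 a + Finsupp.single 1 b + Finsupp.single 2 (m - 1))
      (P a * Q b * ∑ i ∈ Finset.range m, (X 0 + X 1 : MvPolynomial (Fin 3) ℤ) ^ (m - 1 - i) * X 2 ^ i)
    = ∑ j ∈ Finset.range (a + b + 1), g a b j := by
  rw [Finset.mul_sum, coeff_sum]
  have step : ∀ i ∈ Finset.range m,
      coeff (Finsupp.single 0 a + Finsupp.single 1 b + Finsupp.single 2 (m - 1))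
        (P a * Q b * ((X 0 + X 1 : MvPolynomial (Fin 3) ℤ) ^ (m - 1 - i) * X 2 ^ i))
      = g a b (m - 1 - i) := by
    intro i hi
    have hi' : i ≤ m - 1 := by have := Finset.mem_range.mp hi; omega
    rw [← mul_assoc, X_pow_eq_monomial, coeff_mul_monomial']
    have hle : (Finsupp.single 2 i : Fin 3 →₀ ℕ) ≤
        Finsupp.single 0 a + Finsupp.single 1 b + Finsupp.single 2 (m - 1) := by
      intro x
      fin_cases x <;> simp [Finsupp.single_apply] <;> omega
    rw [if_pos hle, mul_one]
    congr 1
    ext x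
    fin_cases x <;>
      simp [Finsupp.single_apply, Finsupp.tsub_apply] <;> omega
  rw [Finset.sum_congr rfl step]
  have := Finset.sum_range_reflect (fun j => g a b j) m
  rw [this]
  refine (Finset.sum_subset (Finset.range_subset_range.mpr (by omega)) ?_).symm
  intro i h1 h2
  simp only [Finset.mem_range] at h1 h2
  exact g_eq_zero a b i (by omega)

end EDstab

open EDstab in
/-- The Friedland–Ottaviani count for order-three tensors of format `(a+1, b+1, m)`
stabilizes at the boundary format `m = a + b + 1`. -/
theorem ed_degree_order_three_stabilizes (a b : ℕ) (ha : 1 ≤ a) (hb : 1 ≤ b)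
    (m : ℕ) (hm : a + b + 1 ≤ m) :
    MvPolynomial.coeff
      (Finsupp.single 0 a + Finsupp.single 1 b + Finsupp.single 2 (m - 1))
      ((∑ i ∈ Finset.range (a + 1), (X 1 + X 2 : MvPolynomial (Fin 3) ℤ) ^ (a - i) * X 0 ^ i) *
        (∑ i ∈ Finset.range (b + 1), (X 0 + X 2 : MvPolynomial (Fin 3) ℤ) ^ (b - i) * X 1 ^ i) *
        (∑ i ∈ Finset.range m, (X 0 + X 1 : MvPolynomial (Fin 3) ℤ) ^ (m - 1 - i) * X 2 ^ i))
    =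
    MvPolynomial.coeff
      (Finsupp.single 0 a + Finsupp.single 1 b + Finsupp.single 2 (a + b))
      ((∑ i ∈ Finset.range (a + 1), (X 1 + X 2 : MvPolynomial (Fin 3) ℤ) ^ (a - i) * X 0 ^ i) *
        (∑ i ∈ Finset.range (b + 1), (X 0 + X 2 : MvPolynomial (Fin 3) ℤ) ^ (b - i) * X 1 ^ i) *
        (∑ i ∈ Finset.range (a + b + 1),
          (X 0 + X 1 : MvPolynomial (Fin 3) ℤ) ^ (a + b - i) * X 2 ^ i)) := by
  have h1 := key a b m hm
  have h2 := key a b (a + b + 1) le_rfl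
  simp only [Nat.add_sub_cancel] at h2
  rw [show (P a * Q b) = (P a) * (Q b) from rfl] at *
  unfold P Q at h1 h2
  rw [h1, h2]
end

section
/- Let U = (u_{ijk}) be a 2 × 2 × 4 complex tensor and let x₁ ∈ ℂ², x₂ ∈ ℂ², x₃ ∈ ℂ⁴ with the rank-one coordinates z_{ijk} = x_{1,i} x_{2,j} x_{3,k}. Suppose (x₁, x₂, x₃) is a singular triple of U, i.e., U(x₂⊗x₃) ∥ x₁, U(x₁⊗x₃) ∥ x₂, U(x₁⊗x₂) ∥ x₃ (each pair of vectors is linearly dependent). Let x₁' = (x_{1,2}, x_{1,1}) and let A' be the 4 × 4 matrix with rows U(x₁'⊗x₂), x₃, U_{(2,1)}, U_{(2,2)}, where U_{(i,j)} = (u_{ij1}, u_{ij2}, u_{ij3}, u_{ij4}) and U(x₁'⊗x₂)_s = ∑_{i,j} u_{ijs} x'_{1,i} x_{2,j}. Then det A' equals det of the matrix with rows (z_{21k})_k, U_{(1,1)}, U_{(2,1)}, U_{(2,2)} plus det of the matrix with rows (z_{22k})_k, U_{(1,2)}, U_{(2,1)}, U_{(2,2)}; in particular det A' = 0 when z_{ijk}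 are the coordinates of U itself (i.e., z = u), so U satisfies this linear relation. -/
private lemma det4_expand (a b c d : Fin 4 → ℂ) : (Matrix.of ![a,b,c,d]).det =
    a 0 * (b 1 * (c 2 * d 3 - c 3 * d 2) - b 2 * (c 1 * d 3 - c 3 * d 1) + b 3 * (c 1 * d 2 - c 2 * d 1))
  - a 1 * (b 0 * (c 2 * d 3 - c 3 * d 2) - b 2 * (c 0 * d 3 - c 3 * d 0) + b 3 * (c 0 * d 2 - c 2 * d 0))
  + a 2 * (b 0 * (c 1 * d 3 - c 3 * d 1) - b 1 * (c 0 * d 3 - c 3 * d 0) + b 3 * (c 0 * d 1 - c 1 * d 0))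
  - a 3 * (b 0 * (c 1 * d 2 - c 2 * d 1) - b 1 * (c 0 * d 2 - c 2 * d 0) + b 2 * (c 0 * d 1 - c 1 * d 0)) := by
  simp [Matrix.det_succ_row_zero, Fin.sum_univ_succ,
    show (Fin.succ 2 : Fin 4) = 3 from rfl,
    show (Fin.succAbove 2 2 : Fin 4) = 3 from rfl,
    show (Fin.succAbove 1 2 : Fin 4) = 3 from rfl,
    show (Fin.castSucc 2 : Fin 4) = 2 from rfl,
    show (Fin.succAbove 3 2 : Fin 4) = 2 from rfl]
  ring

/-- If the first two rows are proportional (all 2×2 minors vanish), the det is 0. -/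
private lemma helper1 (v c r3 r4 : Fin 4 → ℂ) (h : ∀ s t, v s * c t = v t * c s) :
    (Matrix.of ![v, c, r3, r4]).det = 0 := by
  by_cases hc : ∀ t, c t = 0
  · rw [det4_expand, hc 0, hc 1, hc 2, hc 3]; ring
  · push_neg at hc
    obtain ⟨t, ht⟩ := hc
    have hv : ∀ s, v s = v t / c t * c s := by
      intro s; field_simp; linear_combination h s t
    rw [det4_expand, hv 0, hv 1, hv 2, hv 3]; ring

/-- Swapping a row for a proportional one rescales the determinant. -/
private lemma helper2 (w v c r3 r4 : Fin 4 → ℂ) (h : ∀ s t, v s * c t = v t * c s) (s : Fin 4) :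
    v s * (Matrix.of ![w, c, r3, r4]).det = c s * (Matrix.of ![w, v, r3, r4]).det := by
  by_cases hc : ∀ t, c t = 0
  · rw [det4_expand, det4_expand]
    simp only [hc]
    ring
  · push_neg at hc
    obtain ⟨t, ht⟩ := hc
    have hv : ∀ r, v r = v t / c t * c r := by
      intro r; field_simp; linear_combination h r t
    rw [det4_expand, det4_expand, hv 0, hv 1, hv 2, hv 3, hv s]
    ring

/-- The extra linear relation for the format `(2,2,4)`: for a singular triple
`(x₁,x₂,x₃)` of `U`, the determinant of `A'` equals the sum of two determinants
which are linear in the rank-one coordinates `z`; moreover the corresponding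
expression vanishes at `z = u`, so `U` satisfies the relation. -/
theorem extra_relation_224
    (u : Fin 2 → Fin 2 → Fin 4 → ℂ)
    (x₁ x₂ : Fin 2 → ℂ) (x₃ : Fin 4 → ℂ)
    (z : Fin 2 → Fin 2 → Fin 4 → ℂ)
    (hz : ∀ i j k, z i j k = x₁ i * x₂ j * x₃ k)
    -- (x₁, x₂, x₃) is a singular triple of u: each contraction is proportional
    -- to the remaining vector (all 2×2 minors vanish)
    (h₁ : ∀ i i' : Fin 2,
      (∑ j, ∑ k, u i j k * x₂ j * x₃ k) * x₁ i' =
      (∑ j, ∑ k, u i' j k * x₂ j * x₃ k) * x₁ i)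
    (h₂ : ∀ j j' : Fin 2,
      (∑ i, ∑ k, u i j k * x₁ i * x₃ k) * x₂ j' =
      (∑ i, ∑ k, u i j' k * x₁ i * x₃ k) * x₂ j)
    (h₃ : ∀ s s' : Fin 4,
      (∑ i, ∑ j, u i j s * x₁ i * x₂ j) * x₃ s' =
      (∑ i, ∑ j, u i j s' * x₁ i * x₂ j) * x₃ s)
    -- x₁' swaps the coordinates of x₁
    (x₁' : Fin 2 → ℂ) (hx₁' : x₁' = ![x₁ 1, x₁ 0]) :
    (Matrix.of ![fun s => ∑ i, ∑ j, u i j s * x₁' i * x₂ j, x₃,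
        u 1 0, u 1 1]).det
      = (Matrix.of ![z 1 0, u 0 0, u 1 0, u 1 1]).det
        + (Matrix.of ![z 1 1, u 0 1, u 1 0, u 1 1]).det ∧
    (Matrix.of ![u 1 0, u 0 0, u 1 0, u 1 1]).det
      + (Matrix.of ![u 1 1, u 0 1, u 1 0, u 1 1]).det = 0 := by
  -- Expansions of the contraction rows
  have hsum : ∀ s : Fin 4, (∑ i, ∑ j, u i j s * x₁' i * x₂ j)
      = x₁ 1 * x₂ 0 * u 0 0 s + x₁ 1 * x₂ 1 * u 0 1 s
        + x₁ 0 * x₂ 0 * u 1 0 s + x₁ 0 * x₂ 1 * u 1 1 s := by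
    intro s
    rw [hx₁']
    simp [Fin.sum_univ_succ]
    ring
  have hsumV : ∀ s : Fin 4, (∑ i, ∑ j, u i j s * x₁ i * x₂ j)
      = x₁ 0 * x₂ 0 * u 0 0 s + x₁ 0 * x₂ 1 * u 0 1 s
        + x₁ 1 * x₂ 0 * u 1 0 s + x₁ 1 * x₂ 1 * u 1 1 s := by
    intro s
    simp [Fin.sum_univ_succ]
    ring
  -- key: det A' = 0
  have key1 : (Matrix.of ![fun s => ∑ i, ∑ j, u i j s * x₁' i * x₂ j, x₃,
      u 1 0, u 1 1]).det = 0 := by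
    -- α : x₁ 0 * det A' = x₁ 1 * det [V, x₃, u10, u11]
    have hα : x₁ 0 * (Matrix.of ![fun s => ∑ i, ∑ j, u i j s * x₁' i * x₂ j, x₃,
          u 1 0, u 1 1]).det
        = x₁ 1 * (Matrix.of ![fun s => ∑ i, ∑ j, u i j s * x₁ i * x₂ j, x₃,
          u 1 0, u 1 1]).det := by
      rw [det4_expand, det4_expand]
      simp only [hsum, hsumV]
      ring
    have hD1 : (Matrix.of ![fun s => ∑ i, ∑ j, u i j s * x₁ i * x₂ j, x₃,
        u 1 0, u 1 1]).det = 0 :=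
      helper1 _ _ _ _ h₃
    have hA : x₁ 0 * (Matrix.of ![fun s => ∑ i, ∑ j, u i j s * x₁' i * x₂ j, x₃,
        u 1 0, u 1 1]).det = 0 := by
      rw [hα, hD1, mul_zero]
    -- γ : x₁ 1 * det [W, V, u10, u11] = 0
    have hγ : x₁ 1 * (Matrix.of ![fun s => ∑ i, ∑ j, u i j s * x₁' i * x₂ j,
          fun s => ∑ i, ∑ j, u i j s * x₁ i * x₂ j, u 1 0, u 1 1]).det = 0 := by
      rw [det4_expand]
      simp only [hsum, hsumV]
      ring
    -- β : V s * det A' = x₃ s * det [W, V, u10, u11]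
    have hβ : ∀ s : Fin 4, (∑ i, ∑ j, u i j s * x₁ i * x₂ j)
          * (Matrix.of ![fun s => ∑ i, ∑ j, u i j s * x₁' i * x₂ j, x₃,
            u 1 0, u 1 1]).det
        = x₃ s * (Matrix.of ![fun s => ∑ i, ∑ j, u i j s * x₁' i * x₂ j,
            fun s => ∑ i, ∑ j, u i j s * x₁ i * x₂ j, u 1 0, u 1 1]).det :=
      fun s => helper2 _ (fun s => ∑ i, ∑ j, u i j s * x₁ i * x₂ j) x₃ _ _ h₃ s
    have hB : ∀ s : Fin 4, x₁ 1 * ((∑ i, ∑ j, u i j s * x₁ i * x₂ j)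
        * (Matrix.of ![fun s => ∑ i, ∑ j, u i j s * x₁' i * x₂ j, x₃,
          u 1 0, u 1 1]).det) = 0 := by
      intro s
      rw [hβ s]
      calc x₁ 1 * (x₃ s * (Matrix.of ![fun s => ∑ i, ∑ j, u i j s * x₁' i * x₂ j,
              fun s => ∑ i, ∑ j, u i j s * x₁ i * x₂ j, u 1 0, u 1 1]).det)
          = x₃ s * (x₁ 1 * (Matrix.of ![fun s => ∑ i, ∑ j, u i j s * x₁' i * x₂ j,
              fun s => ∑ i, ∑ j, u i j s * x₁ i * x₂ j, u 1 0, u 1 1]).det) := by ring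
        _ = 0 := by rw [hγ, mul_zero]
    by_cases h0 : x₁ 0 = 0
    · by_cases h1 : x₁ 1 = 0
      · rw [det4_expand]
        simp only [hsum, h0, h1]
        ring
      · -- x₁ 0 = 0, x₁ 1 ≠ 0
        have hVP : ∀ s : Fin 4, (x₂ 0 * u 1 0 s + x₂ 1 * u 1 1 s)
            * (Matrix.of ![fun s => ∑ i, ∑ j, u i j s * x₁' i * x₂ j, x₃,
              u 1 0, u 1 1]).det = 0 := by
          intro s
          have hVs : (∑ i, ∑ j, u i j s * x₁ i * x₂ j)
              = x₁ 1 * (x₂ 0 * u 1 0 s + x₂ 1 * u 1 1 s) := by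
            rw [hsumV s, h0]; ring
          have h4 : x₁ 1 * (x₁ 1 * ((x₂ 0 * u 1 0 s + x₂ 1 * u 1 1 s)
              * (Matrix.of ![fun s => ∑ i, ∑ j, u i j s * x₁' i * x₂ j, x₃,
                u 1 0, u 1 1]).det)) = 0 := by
            linear_combination hB s - x₁ 1 *
              (Matrix.of ![fun s => ∑ i, ∑ j, u i j s * x₁' i * x₂ j, x₃,
                u 1 0, u 1 1]).det * hVs
          have h5 := (mul_eq_zero.mp h4).resolve_left h1
          exact (mul_eq_zero.mp h5).resolve_left h1
        by_cases hq : ∀ s : Fin 4, x₂ 0 * u 1 0 s + x₂ 1 * u 1 1 s = 0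
        · by_cases hb0 : x₂ 0 = 0
          · by_cases hb1 : x₂ 1 = 0
            · rw [det4_expand]
              simp only [hsum, h0, hb0, hb1]
              ring
            · have hu : ∀ s : Fin 4, u 1 1 s = 0 := by
                intro s
                have h6 := hq s
                rw [hb0] at h6
                simp only [zero_mul, zero_add] at h6
                exact (mul_eq_zero.mp h6).resolve_left hb1
              rw [det4_expand]
              simp only [hu]
              ring
          · have hu : ∀ s : Fin 4, u 1 0 s = -(x₂ 1 / x₂ 0) * u 1 1 s := by
              intro s
              field_simp
              linear_combination hq s
            rw [det4_expand]
            simp only [hu]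
            ring
        · push_neg at hq
          obtain ⟨s, hs⟩ := hq
          exact (mul_eq_zero.mp (hVP s)).resolve_left hs
    · exact (mul_eq_zero.mp hA).resolve_left h0
  constructor
  · have h6 : (Matrix.of ![z 1 0, u 0 0, u 1 0, u 1 1]).det
        + (Matrix.of ![z 1 1, u 0 1, u 1 0, u 1 1]).det
        = -((Matrix.of ![fun s => ∑ i, ∑ j, u i j s * x₁' i * x₂ j, x₃,
          u 1 0, u 1 1]).det) := by
      rw [det4_expand, det4_expand, det4_expand]
      simp only [hz, hsum]
      ring
    rw [key1] at h6 ⊢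
    rw [h6, neg_zero]
  · rw [det4_expand, det4_expand]
    ring
end
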